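/- Let Δ be any fixpoint of F̂_Σ. Then for every initial path ρ of depth d in the sequence graph Σ, the sequence induced by Δ along ρ is pointwise less than or equal to the result of the sequence closure function applied to the sequence induced by Σ along ρ: seq(Δ, ρ) ≤ F→(seq(Σ, ρ)). -/

import Mathlib

inductive V : Type
  | zero | one | X | T
deriving DecidableEq

instance : Fintype V :=
  ⟨⟨↑[V.zero, V.one, V.X, V.T], Multiset.coe_nodup.mpr (by decide)⟩, fun x => by cases x <;> decide⟩

def vleB : V → V → Bool := fun a b =>
  a = b || a = V.X || b = V.T

def vlub : V → V → V
  | V.X, b => b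
  | a, V.X => a
  | a, b => if a = b then a else V.T

def vglb : V → V → V
  | V.T, b => b
  | a, V.T => a
  | a, b => if a = b then a else V.X

instance : LE V := ⟨fun a b => vleB a b = true⟩
instance : DecidableRel (α := V) (· ≤ ·) := fun a b => inferInstanceAs (Decidable (vleB a b = true))

instance : Lattice V where
  le := (· ≤ ·)
  le_refl := by decide
  le_trans := by decide
  le_antisymm := by decide
  sup := vlub
  le_sup_left := by decide
  le_sup_right := by decide
  sup_le := by decide
  inf := vglb
  inf_le_left := by decide
  inf_le_right := by decide
  le_inf := by decide

instance : BoundedOrder V where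
  top := V.T
  le_top := by decide
  bot := V.X
  bot_le := by decide

def vand : V → V → V
  | V.T, _ => V.T
  | _, V.T => V.T
  | V.zero, _ => V.zero
  | _, V.zero => V.zero
  | V.one, V.one => V.one
  | _, _ => V.X

def vor : V → V → V
  | V.T, _ => V.T
  | _, V.T => V.T
  | V.one, _ => V.one
  | _, V.one => V.one
  | V.zero, V.zero => V.zero
  | _, _ => V.X

def vnot : V → V
  | V.zero => V.one
  | V.one => V.zero
  | V.X => V.X
  | V.T => V.T


/-- `nextf regIn s` propagates register inputs to register outputs:
a register output `n` with register input `n'` receives `s n'`; all other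
nodes receive X. -/
def nextf {Node : Type} (regIn : Node → Option Node) (s : Node → V) : Node → V :=
  fun n => (regIn n).elim V.X s

/-- The closure function for sequences induced by a closure function `F`:
`F→(σ)(0) = F(σ(0))`, `F→(σ)(t+1) = F(σ(t+1) ⊔ next(F→(σ)(t)))`. -/
def Fseq {Node : Type} (F : (Node → V) → (Node → V)) (regIn : Node → Option Node)
    (σ : ℕ → Node → V) : ℕ → Node → V
  | 0 => F (σ 0)
  | t + 1 => F (σ (t + 1) ⊔ nextf regIn (Fseq F regIn σ t))

/-- The one-step function `F̂_Σ` on sequence graphs of a fixed finite shape: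
`F̂_Σ(Δ)(e) = F(Σ(e))` for initial edges `e`, and
`F̂_Σ(Δ)(e) = F(Σ(e) ⊔ ⨅_{i ∈ in(e)} next(Δ(i)))` otherwise. -/
def Fhat {Node E : Type} [DecidableEq E]
    (F : (Node → V) → (Node → V)) (regIn : Node → Option Node)
    (initial : E → Bool) (ine : E → Finset E)
    (Sg : E → Node → V) (Δ : E → Node → V) : E → Node → V :=
  fun e =>
    if initial e then F (Sg e)
    else F (Sg e ⊔ (ine e).inf fun i => nextf regIn (Δ i))

/-- `x` is the greatest fixpoint of `f`. -/
def IsGfp {α : Type*} [Preorder α] (f : α → α) (x : α) : Prop :=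
  f x = x ∧ ∀ y, f y = y → y ≤ x

theorem nextf_mono {Node : Type} (regIn : Node → Option Node) :
    Monotone (nextf regIn) := by
  intro s s' h n
  unfold nextf
  cases regIn n with
  | none => exact le_rfl
  | some m => exact h m

section Fhat

variable {Node E : Type} [DecidableEq E] {F : (Node → V) → (Node → V)}
  {regIn : Node → Option Node} {initial : E → Bool} {ine : E → Finset E}
  {Sg Δ : E → Node → V}

theorem Fhat_of_initial {e : E} (he : initial e = true) :
    Fhat F regIn initial ine Sg Δ e = F (Sg e) := by
  simp [Fhat, he]

theorem Fhat_le_of_mem_ine (hF : Monotone F) {e e' : E} (he' : e' ∈ ine e) :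
    Fhat F regIn initial ine Sg Δ e ≤ F (Sg e ⊔ nextf regIn (Δ e')) := by
  unfold Fhat
  split
  · exact hF le_sup_left
  · exact hF (sup_le_sup_left (Finset.inf_le (f := fun i => nextf regIn (Δ i)) he') _)

end Fhat

theorem fixpoint_le_Fseq_general {Node E : Type} [DecidableEq E]
    (F : (Node → V) → (Node → V)) (regIn : Node → Option Node)
    (initial : E → Bool) (ine : E → Finset E)
    (hmono : ∀ s t : Node → V, s ≤ t → F s ≤ F t)
    (Sg : E → Node → V) (Δ : E → Node → V)
    (hfix : Fhat F regIn initial ine Sg Δ = Δ)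
    (d : ℕ) (ρ : ℕ → E)
    (hinit : initial (ρ 0) = true)
    (hpath : ∀ t, t < d → ρ t ∈ ine (ρ (t + 1))) :
    ∀ t, t ≤ d → Δ (ρ t) ≤ Fseq F regIn (fun t => Sg (ρ t)) t := by
  have hF : Monotone F := fun s t h => hmono s t h
  intro t
  induction t with
  | zero =>
    intro _
    rw [← hfix, Fhat_of_initial hinit]
    rfl
  | succ t ih =>
    intro ht
    calc Δ (ρ (t + 1))
        = Fhat F regIn initial ine Sg Δ (ρ (t + 1)) := by rw [hfix]
      _ ≤ F (Sg (ρ (t + 1)) ⊔ nextf regIn (Δ (ρ t))) := Fhat_le_of_mem_ine hF (hpath t ht)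
      _ ≤ Fseq F regIn (fun t => Sg (ρ t)) (t + 1) :=
        hF (sup_le_sup_left (nextf_mono regIn (ih (Nat.le_of_succ_le ht))) _)

/-- Any fixpoint Δ of `F̂_Σ` derives no more information along any initial path
than the closure function for sequences: `seq(Δ, ρ) ≤ F→(seq(Σ, ρ))`. -/
theorem fixpoint_le_Fseq {Node E : Type} [DecidableEq E]
    (F : (Node → V) → (Node → V)) (regIn : Node → Option Node)
    (initial : E → Bool) (ine : E → Finset E)
    (hmono : ∀ s t : Node → V, s ≤ t → F s ≤ F t)
    (hidem : ∀ s : Node → V, F (F s) = F s)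
    (hext : ∀ s : Node → V, s ≤ F s)
    (Sg : E → Node → V) (Δ : E → Node → V)
    (hfix : Fhat F regIn initial ine Sg Δ = Δ)
    (d : ℕ) (ρ : ℕ → E)
    (hinit : initial (ρ 0) = true)
    (hpath : ∀ t, t < d → ρ t ∈ ine (ρ (t + 1))) :
    ∀ t, t ≤ d → Δ (ρ t) ≤ Fseq F regIn (fun t => Sg (ρ t)) t :=
  fixpoint_le_Fseq_general F regIn initial ine hmono Sg Δ hfix d ρ hinit hpath
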